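/- Let G be a group and n ≥ 2. Consider a finite directed graph with vertex set {1, …, n} and edges E₁, …, E_m, where edge E_i has origin o(i) and terminus t(i) with o(i) < t(i), and carries a label u_i ∈ G; assume the enumeration of edges satisfies: whenever t(i) = o(j), then i < j. Let F be the free group with basis v₁, …, v_n, and in the direct product G × F set g_i = (u_i, v_{o(i)} v_{t(i)}⁻¹) for i = 1, …, m. Then there exist indices i₁ < i₂ < … < i_k (k ≥ 1) with g_{i₁} g_{i₂} ⋯ g_{i_k} = (1_G, v₁ v_n⁻¹) in G × F if and only if there is a directed edge path E_{i₁}, E_{i₂}, …, E_{i_k} from vertex 1 to vertex n (i.e., o(i₁) = 1, t(i_k) = n, and t(i_j) = o(i_{j+1}) for all j) whose labels satisfy u_{i₁} u_{i₂} ⋯ u_{i_k} = 1 in G. -/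

import Mathlib

/-!
Along a directed edge path the `F`-components `v_{o(i)} v_{t(i)}⁻¹` telescope to `v₁ v_n⁻¹`, and
the enumeration condition forces the edges of a path to appear in increasing order; this gives
one direction. Conversely, abelianize `F`: the chosen edges then satisfy
`∑ (v_{o(i)} - v_{t(i)}) = v₁ - v_n`. No chosen edge ends at the origin of the first one (it would
come earlier in the enumeration), so that origin has positive coefficient and must be `v₁`;
removing the first edge and inducting shows that the chosen edges form a path from `1` to `n`.
-/

section EdgePath

variable {α : Type*}

/-- The vertex sequence read off the origins of `L` (followed by `y`) agrees with the one read off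
its termini (preceded by `x`). -/
def IsEdgePath (x y : α) (L : List (α × α)) : Prop :=
  x :: L.map Prod.snd = L.map Prod.fst ++ [y]

@[simp] theorem isEdgePath_nil {x y : α} : IsEdgePath x y [] ↔ x = y := by
  simp [IsEdgePath]

@[simp] theorem isEdgePath_cons {x y a b : α} {L : List (α × α)} :
    IsEdgePath x y ((a, b) :: L) ↔ x = a ∧ IsEdgePath b y L := by
  simp [IsEdgePath]

theorem IsEdgePath.prod_map_mul_inv {G : Type*} [Group G] (f : α → G) {x y : α}
    {L : List (α × α)} (h : IsEdgePath x y L) :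
    (L.map fun p => f p.1 * (f p.2)⁻¹).prod = f x * (f y)⁻¹ := by
  induction L generalizing x with
  | nil => simp_all
  | cons p L ih =>
    obtain ⟨a, b⟩ := p
    obtain ⟨rfl, hL⟩ := isEdgePath_cons.1 h
    simp [ih hL, mul_assoc]

theorem isEdgePath_of_sum_map_single_sub_single [DecidableEq α] {x y : α}
    {L : List (α × α)} (hpw : L.Pairwise fun p q => q.2 ≠ p.1) (hne : ∀ p ∈ L, p.1 ≠ p.2)
    (h : (L.map fun p => (Pi.single p.1 1 - Pi.single p.2 1 : α → ℤ)).sum =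
      Pi.single x 1 - Pi.single y 1) :
    IsEdgePath x y L := by
  induction L generalizing x with
  | nil =>
    rw [isEdgePath_nil]
    by_contra hxy
    simpa [Pi.single_apply, Ne.symm hxy] using congrFun h x
  | cons p L ih =>
    obtain ⟨a, b⟩ := p
    rw [List.pairwise_cons] at hpw
    rw [List.map_cons, List.sum_cons] at h
    -- no edge of `L` ends at `a`, so `a` has coefficient at least `1` on the left
    have hx : x = a := by
      have hS : 0 ≤ (L.map fun p => (Pi.single p.1 1 - Pi.single p.2 1 : α → ℤ)).sum a := by
        rw [Pi.list_sum_apply, List.map_map]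
        refine List.sum_nonneg fun z hz => ?_
        obtain ⟨q, hq, rfl⟩ := List.mem_map.1 hz
        simp only [Function.comp_apply, Pi.sub_apply, Pi.single_apply, if_neg (hpw.1 q hq).symm]
        split_ifs <;> norm_num
      have ha := congrFun h a
      by_contra hxa
      simp only [Pi.add_apply, Pi.sub_apply, Pi.single_eq_same,
        Pi.single_eq_of_ne (hne (a, b) List.mem_cons_self), Pi.single_eq_of_ne (Ne.symm hxa),
        Pi.single_apply] at ha
      omega
    subst hx
    exact isEdgePath_cons.2 ⟨rfl, ih hpw.2 (fun p hp => hne p (by simp [hp]))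
      (by linear_combination h)⟩

theorem isEdgePath_ofFn_iff {k : ℕ} (hk : 1 ≤ k) (a b : Fin k → α) (x y : α) :
    IsEdgePath x y (List.ofFn fun j => (a j, b j)) ↔
      a ⟨0, by omega⟩ = x ∧ b ⟨k - 1, by omega⟩ = y ∧
        ∀ (j : ℕ) (hj : j + 1 < k), b ⟨j, by omega⟩ = a ⟨j + 1, hj⟩ := by
  obtain ⟨k, rfl⟩ := Nat.exists_eq_add_of_le' hk
  simp only [IsEdgePath, List.map_ofFn, Function.comp_def]
  rw [List.ofFn_succ (f := a), List.ofFn_succ' (f := b), List.concat_eq_append,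
    ← List.cons_append, List.append_singleton_inj]
  simp only [List.cons.injEq, List.ofFn_inj, funext_iff, Fin.forall_iff]
  exact ⟨fun ⟨⟨h0, hs⟩, hl⟩ => ⟨h0.symm, hl, fun j hj => hs j (by omega)⟩,
    fun ⟨h0, hl, hs⟩ => ⟨⟨h0.symm, fun j hj => hs j (by omega)⟩, hl⟩⟩

theorem FreeGroup.isEdgePath_of_prod_map_of_mul_inv [DecidableEq α] {x y : α}
    {L : List (α × α)} (hpw : L.Pairwise fun p q => q.2 ≠ p.1) (hne : ∀ p ∈ L, p.1 ≠ p.2)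
    (h : (L.map fun p => of p.1 * (of p.2)⁻¹).prod = of x * (of y)⁻¹) :
    IsEdgePath x y L := by
  refine isEdgePath_of_sum_map_single_sub_single hpw hne ?_
  have habel := congrArg (lift fun a => Multiplicative.ofAdd (Pi.single a (1 : ℤ))) h
  simpa [map_list_prod, List.map_map, Function.comp_def, sub_eq_add_neg, List.sum_map_add]
    using congrArg Multiplicative.toAdd habel

end EdgePath

theorem Prod.list_prod_ofFn_mk {M N : Type*} [Monoid M] [Monoid N] {k : ℕ} (f : Fin k → M)
    (g : Fin k → N) :
    (List.ofFn fun j => (f j, g j)).prod = ((List.ofFn f).prod, (List.ofFn g).prod) := by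
  let l := List.ofFn fun j => (f j, g j)
  ext
  · simpa [l, List.map_ofFn, Function.comp_def] using map_list_prod (MonoidHom.fst M N) l
  · simpa [l, List.map_ofFn, Function.comp_def] using map_list_prod (MonoidHom.snd M N) l

theorem Fin.strictMono_of_lt_succ {β : Type*} [Preorder β] {k : ℕ} {f : Fin k → β}
    (h : ∀ (j : ℕ) (hj : j + 1 < k), f ⟨j, by omega⟩ < f ⟨j + 1, hj⟩) : StrictMono f := by
  cases k with
  | zero => exact fun i => i.elim0
  | succ k => exact Fin.strictMono_iff_lt_succ.2 fun i => h i (by omega)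

/-- Reduction of the acyclic graph word problem to the subset sum problem in `G × F`.
The graph has vertex set `{1,…,n}` (modeled as `Fin n`) and edges `E₁,…,E_m` with
origins `o i`, termini `t i`, `o i < t i`, labels `u i ∈ G`, and the edge enumeration
is compatible with paths: `t i = o j → i < j`. With `F = FreeGroup (Fin n)`,
`v_j = FreeGroup.of j`, and `g_i = (u_i, v_{o(i)} v_{t(i)}⁻¹)` in `G × F`, a subsequence
product of the `g_i` equals `(1, v₁ v_n⁻¹)` iff there is a directed edge path from
vertex `1` to vertex `n` whose labels multiply to `1` in `G`. -/
theorem agp_to_ssp_prod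
    {G : Type*} [Group G] (n m : ℕ) (hn : 2 ≤ n)
    (o t : Fin m → Fin n)
    (henum : ∀ i j : Fin m, t i = o j → i < j)
    (u : Fin m → G) :
    (∃ (k : ℕ) (_ : 1 ≤ k) (idx : Fin k → Fin m), StrictMono idx ∧
        (List.ofFn fun j =>
            ((u (idx j), FreeGroup.of (o (idx j)) * (FreeGroup.of (t (idx j)))⁻¹) :
              G × FreeGroup (Fin n))).prod =
          ((1, FreeGroup.of (⟨0, by omega⟩ : Fin n) *
              (FreeGroup.of (⟨n - 1, by omega⟩ : Fin n))⁻¹) : G × FreeGroup (Fin n))) ↔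
    (∃ (k : ℕ) (hk : 1 ≤ k) (idx : Fin k → Fin m),
        o (idx ⟨0, by omega⟩) = (⟨0, by omega⟩ : Fin n) ∧
        t (idx ⟨k - 1, by omega⟩) = (⟨n - 1, by omega⟩ : Fin n) ∧
        (∀ (j : ℕ) (hj : j + 1 < k), t (idx ⟨j, by omega⟩) = o (idx ⟨j + 1, hj⟩)) ∧
        (List.ofFn fun j => u (idx j)).prod = 1) := by
  constructor
  · rintro ⟨k, hk, idx, hmono, hprod⟩
    rw [Prod.list_prod_ofFn_mk, Prod.mk.injEq] at hprod
    have hpath : IsEdgePath ⟨0, by omega⟩ ⟨n - 1, by omega⟩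
        (List.ofFn fun j => (o (idx j), t (idx j))) := by
      refine FreeGroup.isEdgePath_of_prod_map_of_mul_inv ?_ ?_ ?_
      · exact List.pairwise_ofFn.2 fun i j hij hji => (hmono hij).not_gt (henum _ _ hji)
      · exact List.forall_mem_ofFn_iff.2 fun j hj => (henum _ _ hj.symm).false
      · rw [List.map_ofFn]
        exact hprod.2
    obtain ⟨h0, hlast, hsucc⟩ := (isEdgePath_ofFn_iff hk _ _ _ _).1 hpath
    exact ⟨k, hk, idx, h0, hlast, hsucc, hprod.1⟩
  · rintro ⟨k, hk, idx, h0, hlast, hsucc, hu⟩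
    refine ⟨k, hk, idx, Fin.strictMono_of_lt_succ fun j hj => henum _ _ (hsucc j hj), ?_⟩
    have hpath := (isEdgePath_ofFn_iff hk (fun j => o (idx j)) (fun j => t (idx j)) _ _).2
      ⟨h0, hlast, hsucc⟩
    rw [Prod.list_prod_ofFn_mk, hu, ← hpath.prod_map_mul_inv FreeGroup.of, List.map_ofFn]
    rfl
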